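/- arXiv:1404.1724 — 2 statements merged into one kernel-verified Lean document; each statement's English description precedes it below -/
import Mathlib

section
/- Hopf-type lemma at the origin: Let 0 < R < ∞. Suppose ū is a super-solution and u̲ a sub-solution of (⋆) on (0,R) such that ū(r) = r^{γ_+}·f(r) and u̲(r) = r^{γ_+}·g(r) for some functions f and g that are continuous on [0,R). If ū(r) ≥ u̲(r) for all r ∈ (0,R), then either f(0) > g(0) (that is, lim_{r→0} ū(r)/r^{γ_+} > lim_{r→0} u̲(r)/r^{γ_+}), or ū ≡ u̲ on (0,R). -/
open Set Filter Topology MeasureTheory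
open scoped ENNReal NNReal

/-- `γ₊ = ((1-p) + √((p-1)² + 4q))/2`, the positive root of `γ² + (p-1)γ - q = 0`. -/
noncomputable def gammaPlus (p q : ℝ) : ℝ :=
  ((1 - p) + Real.sqrt ((p - 1) ^ 2 + 4 * q)) / 2

/-- Condition (condF) on the nonlinearity `F` (with `0 < sp` recorded separately). -/
def CondF (F : ℝ → ℝ) (sp : ℝ) : Prop :=
  ContDiff ℝ 1 F ∧ F 0 = 0 ∧ F sp = 0 ∧
    (∀ t ∈ Set.Ioo 0 sp, F t < 0) ∧ (∀ t, sp < t → 0 < F t) ∧ 0 < deriv F sp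

/-- The ODE (⋆) `u'' + (p/r) u' - (q/r²) u = F(u)` holds at the point `r`. -/
def ODEAt (p q : ℝ) (F : ℝ → ℝ) (u : ℝ → ℝ) (r : ℝ) : Prop :=
  deriv (deriv u) r + (p / r) * deriv u r - (q / r ^ 2) * u r = F (u r)

/-- `ψ` is locally Lipschitz on the set `I`. -/
def LocLipOn (I : Set ℝ) (ψ : ℝ → ℝ) : Prop :=
  ∀ x ∈ I, ∃ K : ℝ≥0, ∃ t ∈ nhdsWithin x I, LipschitzOnWith K ψ t

/-- `ψ` is a locally Lipschitz, piecewise `C²` super-solution of (⋆) on `I`: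
outside a locally finite set `S` of jump points it is `C²` and satisfies
`ψ'' + (p/r)ψ' - (q/r²)ψ ≤ F(ψ)`, and at each jump point the one-sided
derivatives exist with `ψ'(r₀⁻) > ψ'(r₀⁺)`. -/
def IsSuperSolutionOn (p q : ℝ) (F : ℝ → ℝ) (I : Set ℝ) (ψ : ℝ → ℝ) : Prop :=
  LocLipOn I ψ ∧
    ∃ S : Set ℝ,
      (∀ x ∈ I, ∃ ε > 0, (S ∩ Set.Ioo (x - ε) (x + ε)).Finite) ∧
      (∀ x ∈ I \ S, ContDiffAt ℝ 2 ψ x ∧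
        deriv (deriv ψ) x + (p / x) * deriv ψ x - (q / x ^ 2) * ψ x ≤ F (ψ x)) ∧
      (∀ x ∈ I ∩ S, ∃ dl dr : ℝ, HasDerivWithinAt ψ dl (Set.Iio x) x ∧
        HasDerivWithinAt ψ dr (Set.Ioi x) x ∧ dr < dl)

/-- `ψ` is a locally Lipschitz, piecewise `C²` sub-solution of (⋆) on `I`. -/
def IsSubSolutionOn (p q : ℝ) (F : ℝ → ℝ) (I : Set ℝ) (ψ : ℝ → ℝ) : Prop :=
  LocLipOn I ψ ∧
    ∃ S : Set ℝ,
      (∀ x ∈ I, ∃ ε > 0, (S ∩ Set.Ioo (x - ε) (x + ε)).Finite) ∧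
      (∀ x ∈ I \ S, ContDiffAt ℝ 2 ψ x ∧
        F (ψ x) ≤ deriv (deriv ψ) x + (p / x) * deriv ψ x - (q / x ^ 2) * ψ x) ∧
      (∀ x ∈ I ∩ S, ∃ dl dr : ℝ, HasDerivWithinAt ψ dl (Set.Iio x) x ∧
        HasDerivWithinAt ψ dr (Set.Ioi x) x ∧ dl < dr)

/-!
Write `L` for `radialOp p q` and put `w = ub - lb ≥ 0`. Where both functions are `C²`,
`L w ≤ F ub - F lb ≤ K w` for a Lipschitz constant `K` of `F` on their range; at a corner of
either one `w` has a concave kink. Hence, for a strict barrier `φ` (`L φ > K φ`) and `ε > 0`,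
`w - ε φ` has no nonpositive interior minimum.

Near the origin `φ = r ^ γ + r ^ (γ + 1)` is such a barrier, with `L (r ^ γ) = 0`. If
`f 0 = g 0` then `w - ε φ = r ^ γ (f - g - ε (1 + r))` is negative close to `0`, so `w` cannot be
positive at any small `b`: it vanishes there. At that interior zero `w' (b) = 0`, and the Hopf
barrier `exp (α (r - b)) - 1` forbids `w` to become positive anywhere to the right of `b`.
-/

noncomputable def radialOp (p q : ℝ) (u : ℝ → ℝ) (r : ℝ) : ℝ :=
  deriv (deriv u) r + (p / r) * deriv u r - (q / r ^ 2) * u r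

section SecondDerivative

variable {u v : ℝ → ℝ} {m : ℝ}

lemma ContDiffAt.differentiableAt_deriv (h : ContDiffAt ℝ 2 u m) :
    DifferentiableAt ℝ (deriv u) m :=
  (h.derivWithin (m := 1) (by norm_num)).differentiableAt one_ne_zero

lemma ContDiffAt.eventually_differentiableAt (h : ContDiffAt ℝ 2 u m) :
    ∀ᶠ x in 𝓝 m, DifferentiableAt ℝ u x :=
  (h.eventually (by simp)).mono fun _ hx => hx.differentiableAt two_ne_zero

lemma deriv_deriv_add (hu : ContDiffAt ℝ 2 u m) (hv : ContDiffAt ℝ 2 v m) :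
    deriv (deriv (u + v)) m = deriv (deriv u) m + deriv (deriv v) m := by
  have h : deriv (u + v) =ᶠ[𝓝 m] deriv u + deriv v := by
    filter_upwards [hu.eventually_differentiableAt, hv.eventually_differentiableAt]
      with x hux hvx using deriv_add hux hvx
  rw [h.deriv_eq, deriv_add hu.differentiableAt_deriv hv.differentiableAt_deriv]

lemma deriv_deriv_sub (hu : ContDiffAt ℝ 2 u m) (hv : ContDiffAt ℝ 2 v m) :
    deriv (deriv (u - v)) m = deriv (deriv u) m - deriv (deriv v) m := by
  have h : deriv (u - v) =ᶠ[𝓝 m] deriv u - deriv v := by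
    filter_upwards [hu.eventually_differentiableAt, hv.eventually_differentiableAt]
      with x hux hvx using deriv_sub hux hvx
  rw [h.deriv_eq, deriv_sub hu.differentiableAt_deriv hv.differentiableAt_deriv]

lemma deriv_deriv_const_smul (c : ℝ) (hu : ContDiffAt ℝ 2 u m) :
    deriv (deriv (c • u)) m = c * deriv (deriv u) m := by
  have h : deriv (c • u) =ᶠ[𝓝 m] c • deriv u := by
    filter_upwards [hu.eventually_differentiableAt] with x hux using deriv_const_smul c hux
  rw [h.deriv_eq, deriv_const_smul c hu.differentiableAt_deriv, smul_eq_mul]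

variable {p q : ℝ}

lemma radialOp_add (hu : ContDiffAt ℝ 2 u m) (hv : ContDiffAt ℝ 2 v m) :
    radialOp p q (u + v) m = radialOp p q u m + radialOp p q v m := by
  simp only [radialOp, deriv_deriv_add hu hv, Pi.add_apply,
    deriv_add (hu.differentiableAt two_ne_zero) (hv.differentiableAt two_ne_zero)]
  ring

lemma radialOp_sub (hu : ContDiffAt ℝ 2 u m) (hv : ContDiffAt ℝ 2 v m) :
    radialOp p q (u - v) m = radialOp p q u m - radialOp p q v m := by
  simp only [radialOp, deriv_deriv_sub hu hv, Pi.sub_apply,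
    deriv_sub (hu.differentiableAt two_ne_zero) (hv.differentiableAt two_ne_zero)]
  ring

lemma radialOp_const_smul (c : ℝ) (hu : ContDiffAt ℝ 2 u m) :
    radialOp p q (c • u) m = c * radialOp p q u m := by
  simp only [radialOp, deriv_deriv_const_smul c hu, Pi.smul_apply, smul_eq_mul,
    deriv_const_smul c (hu.differentiableAt two_ne_zero)]
  ring

end SecondDerivative

section LocalMin

variable {f : ℝ → ℝ} {a d dl dr : ℝ}

lemma IsLocalMin.deriv_deriv_nonneg (h : IsLocalMin f a) (hc : ContinuousAt f a) :
    0 ≤ deriv (deriv f) a := by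
  by_contra! hneg
  have hmax := isLocalMax_of_deriv_deriv_neg hneg h.deriv_eq_zero hc
  have hconst : ∀ᶠ x in 𝓝 a, f x = f a := (h.and hmax).mono fun x hx => le_antisymm hx.2 hx.1
  have hderiv : deriv f =ᶠ[𝓝 a] fun _ => 0 := by
    filter_upwards [hconst.eventually_nhds] with x hx
    exact (Filter.EventuallyEq.deriv_eq hx).trans (deriv_const x (f a))
  rw [hderiv.deriv_eq, deriv_const] at hneg
  exact hneg.false

lemma IsLocalMinOn.hasDerivWithinAt_Ioi_nonneg (h : IsLocalMinOn f (Ioi a) a)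
    (hf : HasDerivWithinAt f d (Ioi a) a) : 0 ≤ d := by
  refine ge_of_tendsto ((hasDerivWithinAt_iff_tendsto_slope' self_notMem_Ioi).1 hf) ?_
  filter_upwards [h, self_mem_nhdsWithin] with x hx hxa
  rw [slope_def_field]
  exact div_nonneg (sub_nonneg.2 hx) (sub_pos.2 hxa).le

lemma IsLocalMinOn.hasDerivWithinAt_Iio_nonpos (h : IsLocalMinOn f (Iio a) a)
    (hf : HasDerivWithinAt f d (Iio a) a) : d ≤ 0 := by
  refine le_of_tendsto ((hasDerivWithinAt_iff_tendsto_slope' self_notMem_Iio).1 hf) ?_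
  filter_upwards [h, self_mem_nhdsWithin] with x hx hxa
  rw [slope_def_field]
  exact div_nonpos_of_nonneg_of_nonpos (sub_nonneg.2 hx) (sub_neg.2 hxa).le

lemma IsLocalMin.hasDerivWithinAt_Iio_le_Ioi (h : IsLocalMin f a)
    (hl : HasDerivWithinAt f dl (Iio a) a) (hr : HasDerivWithinAt f dr (Ioi a) a) : dl ≤ dr :=
  ((h.on _).hasDerivWithinAt_Iio_nonpos hl).trans ((h.on _).hasDerivWithinAt_Ioi_nonneg hr)

lemma IsLocalMin.radialOp_nonneg {p q : ℝ} (h : IsLocalMin f a) (hc : ContinuousAt f a)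
    (hq : 0 ≤ q) (hfa : f a ≤ 0) : 0 ≤ radialOp p q f a := by
  have h2 := h.deriv_deriv_nonneg hc
  have hqa : 0 ≤ q / a ^ 2 := by positivity
  simp only [radialOp, h.deriv_eq_zero, mul_zero, add_zero]
  nlinarith

end LocalMin

def IsLinearSuperSolutionAt (p q K : ℝ) (w : ℝ → ℝ) (m : ℝ) : Prop :=
  (ContDiffAt ℝ 2 w m ∧ radialOp p q w m ≤ K * w m) ∨
    ∃ dl dr : ℝ, HasDerivWithinAt w dl (Iio m) m ∧ HasDerivWithinAt w dr (Ioi m) m ∧ dr < dl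

theorem IsLinearSuperSolutionAt.not_isLocalMin_sub_smul {p q K ε m : ℝ} {w φ : ℝ → ℝ}
    (hw : IsLinearSuperSolutionAt p q K w m) (hq : 0 ≤ q) (hK : 0 ≤ K)
    (hφ : ContDiffAt ℝ 2 φ m) (hbar : K * φ m < radialOp p q φ m) (hε : 0 < ε)
    (hm : w m - ε * φ m ≤ 0) : ¬ IsLocalMin (w - ε • φ) m := by
  intro hmin
  rcases hw with ⟨hw2, hLw⟩ | ⟨dl, dr, hl, hr, hlt⟩
  · have hεφ : ContDiffAt ℝ 2 (ε • φ) m := hφ.const_smul ε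
    have hL := hmin.radialOp_nonneg (p := p) (hw2.sub hεφ).continuousAt hq hm
    rw [radialOp_sub hw2 hεφ, radialOp_const_smul ε hφ] at hL
    nlinarith [mul_lt_mul_of_pos_left hbar hε, mul_nonpos_of_nonneg_of_nonpos hK hm]
  · have hφ' := (hφ.differentiableAt two_ne_zero).hasDerivAt.const_smul ε
    have := hmin.hasDerivWithinAt_Iio_le_Ioi (hl.sub hφ'.hasDerivWithinAt)
      (hr.sub hφ'.hasDerivWithinAt)
    linarith

lemma isLinearSuperSolutionAt_sub {p q K m : ℝ} {F ub lb : ℝ → ℝ} {I : Set ℝ}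
    (hsuper : IsSuperSolutionOn p q F I ub) (hsub : IsSubSolutionOn p q F I lb) (hm : m ∈ I)
    (hFK : F (ub m) - F (lb m) ≤ K * (ub m - lb m)) :
    IsLinearSuperSolutionAt p q K (ub - lb) m := by
  obtain ⟨-, SU, -, hsmU, hjU⟩ := hsuper
  obtain ⟨-, SL, -, hsmL, hjL⟩ := hsub
  by_cases hU : m ∈ SU <;> by_cases hL : m ∈ SL
  · obtain ⟨dlU, drU, hlU, hrU, hU'⟩ := hjU m ⟨hm, hU⟩
    obtain ⟨dlL, drL, hlL, hrL, hL'⟩ := hjL m ⟨hm, hL⟩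
    exact Or.inr ⟨dlU - dlL, drU - drL, hlU.sub hlL, hrU.sub hrL, by linarith⟩
  · obtain ⟨dlU, drU, hlU, hrU, hU'⟩ := hjU m ⟨hm, hU⟩
    have hlb := ((hsmL m ⟨hm, hL⟩).1.differentiableAt two_ne_zero).hasDerivAt
    exact Or.inr ⟨dlU - deriv lb m, drU - deriv lb m, hlU.sub hlb.hasDerivWithinAt,
      hrU.sub hlb.hasDerivWithinAt, by linarith⟩
  · obtain ⟨dlL, drL, hlL, hrL, hL'⟩ := hjL m ⟨hm, hL⟩
    have hub := ((hsmU m ⟨hm, hU⟩).1.differentiableAt two_ne_zero).hasDerivAt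
    exact Or.inr ⟨deriv ub m - dlL, deriv ub m - drL, hub.hasDerivWithinAt.sub hlL,
      hub.hasDerivWithinAt.sub hrL, by linarith⟩
  · obtain ⟨hub, hLub⟩ := hsmU m ⟨hm, hU⟩
    obtain ⟨hlb, hLlb⟩ := hsmL m ⟨hm, hL⟩
    refine Or.inl ⟨hub.sub hlb, ?_⟩
    rw [radialOp_sub hub hlb]
    exact (sub_le_sub hLub hLlb).trans hFK

theorem exists_isLinearSuperSolutionAt_sub {p q : ℝ} {F ub lb : ℝ → ℝ} {I s : Set ℝ}
    (hF : ContDiff ℝ 1 F) (hsuper : IsSuperSolutionOn p q F I ub)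
    (hsub : IsSubSolutionOn p q F I lb) (hge : ∀ m ∈ I, lb m ≤ ub m) (hs : IsCompact s)
    (hub : ContinuousOn ub s) (hlb : ContinuousOn lb s) :
    ∃ K : ℝ≥0, ∀ m ∈ s ∩ I, IsLinearSuperSolutionAt p q K (ub - lb) m := by
  obtain ⟨K, hK⟩ := hF.locallyLipschitz.locallyLipschitzOn.exists_lipschitzOnWith_of_compact
    ((hs.image_of_continuousOn hub).union (hs.image_of_continuousOn hlb))
  refine ⟨K, fun m hm => isLinearSuperSolutionAt_sub hsuper hsub hm.2 ?_⟩
  have hdist := hK.dist_le_mul (ub m) (Or.inl ⟨m, hm.1, rfl⟩) (lb m) (Or.inr ⟨m, hm.1, rfl⟩)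
  rw [Real.dist_eq, Real.dist_eq, abs_of_nonneg (sub_nonneg.2 (hge m hm.2))] at hdist
  exact (le_abs_self _).trans hdist

section Barriers

variable {p q : ℝ}

lemma radialOp_rpow (a : ℝ) {m : ℝ} (hm : 0 < m) :
    radialOp p q (fun r => r ^ a) m = (a * (a - 1) + p * a - q) * m ^ a / m ^ 2 := by
  have hd : deriv (deriv fun r : ℝ => r ^ a) m = a * ((a - 1) * m ^ (a - 1 - 1)) := by
    rw [Real.deriv_rpow_const', deriv_const_mul _ (Real.differentiableAt_rpow_const_of_ne _ hm.ne'),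
      Real.deriv_rpow_const]
  have h1 : m ^ (a - 1) = m ^ a / m := Real.rpow_sub_one hm.ne' a
  have h2 : m ^ (a - 1 - 1) = m ^ a / m / m := by rw [Real.rpow_sub_one hm.ne', h1]
  simp only [radialOp, hd, Real.deriv_rpow_const, h1, h2]
  field_simp

lemma lt_radialOp_rpow_add_rpow {K γ m : ℝ} (hγ : γ ^ 2 + (p - 1) * γ = q) (hm : 0 < m)
    (hmK : K * (m + m ^ 2) < 2 * γ + p) :
    K * (m ^ γ + m ^ (γ + 1)) < radialOp p q ((fun r => r ^ γ) + fun r => r ^ (γ + 1)) m := by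
  rw [radialOp_add (Real.contDiffAt_rpow_const_of_ne hm.ne')
    (Real.contDiffAt_rpow_const_of_ne hm.ne'), radialOp_rpow γ hm, radialOp_rpow (γ + 1) hm,
    Real.rpow_add_one hm.ne']
  have hpos : 0 < m ^ γ / m := by positivity
  calc K * (m ^ γ + m ^ γ * m) = K * (m + m ^ 2) * (m ^ γ / m) := by field_simp
    _ < (2 * γ + p) * (m ^ γ / m) := mul_lt_mul_of_pos_right hmK hpos
    _ = _ := by
      have h0 : γ * (γ - 1) + p * γ - q = 0 := by linear_combination hγ
      have h1 : (γ + 1) * (γ + 1 - 1) + p * (γ + 1) - q = 2 * γ + p := by linear_combination hγ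
      rw [h0, h1]
      field_simp
      ring

lemma hasDerivAt_exp_mul_sub (α a x : ℝ) :
    HasDerivAt (fun r => Real.exp (α * (r - a))) (α * Real.exp (α * (x - a))) x := by
  simpa [mul_comm] using (((hasDerivAt_id x).sub_const a).const_mul α).exp

lemma radialOp_exp_sub_one (α a : ℝ) {m : ℝ} :
    radialOp p q (fun r => Real.exp (α * (r - a)) - 1) m =
      α ^ 2 * Real.exp (α * (m - a)) + p / m * (α * Real.exp (α * (m - a)))
        - q / m ^ 2 * (Real.exp (α * (m - a)) - 1) := by
  have hd : deriv (fun r => Real.exp (α * (r - a)) - 1) = fun x => α * Real.exp (α * (x - a)) :=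
    funext fun x => ((hasDerivAt_exp_mul_sub α a x).sub_const 1).deriv
  simp only [radialOp, hd, ((hasDerivAt_exp_mul_sub α a m).const_mul α).deriv]
  ring

lemma lt_radialOp_exp_sub_one {K α a m : ℝ} (hp : 0 ≤ p) (hq : 0 ≤ q) (hK : 0 ≤ K)
    (ha : 0 < a) (ham : a ≤ m) (hα : q / a ^ 2 + K + 1 ≤ α) :
    K * (Real.exp (α * (m - a)) - 1) < radialOp p q (fun r => Real.exp (α * (r - a)) - 1) m := by
  rw [radialOp_exp_sub_one]
  set E := Real.exp (α * (m - a))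
  have hqa : 0 ≤ q / a ^ 2 := by positivity
  have hα0 : 0 ≤ α := by linarith
  have hE : 1 ≤ E := Real.one_le_exp (mul_nonneg hα0 (sub_nonneg.2 ham))
  have hqm : q / m ^ 2 ≤ q / a ^ 2 := by gcongr
  have hpm : 0 ≤ p / m * (α * E) := by have := ha.trans_le ham; positivity
  have hαE : (q / a ^ 2 + K + 1) * E ≤ α ^ 2 * E := by
    gcongr
    nlinarith
  have hqE := mul_le_mul_of_nonneg_right hqm (sub_nonneg.2 hE)
  linarith

end Barriers

theorem IsLocalMin.nonpos_of_isLinearSuperSolutionAt {p q K a b : ℝ} {w : ℝ → ℝ}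
    (hmin : IsLocalMin w a) (hwa : w a = 0) (hp : 0 ≤ p) (hq : 0 ≤ q) (hK : 0 ≤ K)
    (ha : 0 < a) (hab : a < b) (hw : ContinuousOn w (Icc a b))
    (hsol : ∀ m ∈ Icc a b, IsLinearSuperSolutionAt p q K w m) : w b ≤ 0 := by
  by_contra! hwb
  set α := q / a ^ 2 + K + 1
  set h : ℝ → ℝ := fun r => Real.exp (α * (r - a)) - 1
  have hα : 0 < α := by positivity
  have hh2 : ∀ m, ContDiffAt ℝ 2 h m := fun m => by fun_prop
  have hha : h a = 0 := by simp [h]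
  have hhb : 0 < h b := sub_pos.2 (Real.one_lt_exp_iff.2 (mul_pos hα (sub_pos.2 hab)))
  set ε := w b / h b
  have hε : 0 < ε := div_pos hwb hhb
  set v := w - ε • h
  have hva : v a = 0 := by simp [v, hwa, hha]
  have hvb : v b = 0 := by simp [v, ε, div_mul_cancel₀ _ hhb.ne']
  obtain ⟨m, hm, hvmin⟩ := isCompact_Icc.exists_isMinOn (nonempty_Icc.2 hab.le)
    (hw.sub ((by fun_prop : Continuous (ε • h)).continuousOn))
  rcases lt_or_ge (v m) 0 with hvm | hvm
  · have hma : a < m := hm.1.lt_of_ne (by rintro rfl; linarith)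
    have hmb : m < b := hm.2.lt_of_ne (by rintro rfl; linarith)
    exact (hsol m hm).not_isLocalMin_sub_smul hq hK (hh2 m)
      (lt_radialOp_exp_sub_one hp hq hK ha hma.le le_rfl) hε hvm.le
      (hvmin.isLocalMin (Icc_mem_nhds hma hmb))
  -- now `ε h ≤ w` on `[a, b]`, which forces `0 < ε h'(a) ≤ w'(a) = 0`
  have hw2 : ContDiffAt ℝ 2 w a := ((hsol a ⟨le_rfl, hab.le⟩).resolve_right
    fun ⟨_, _, hl, hr, hlt⟩ => (hmin.hasDerivWithinAt_Iio_le_Ioi hl hr).not_gt hlt).1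
  have hw' : HasDerivAt w 0 a :=
    hmin.deriv_eq_zero ▸ (hw2.differentiableAt two_ne_zero).hasDerivAt
  have hv' : HasDerivWithinAt v (0 - ε • (α * Real.exp (α * (a - a)))) (Ioi a) a :=
    (hw'.sub (((hasDerivAt_exp_mul_sub α a a).sub_const 1).const_smul ε)).hasDerivWithinAt
  have hvmin' : IsLocalMinOn v (Ioi a) a := by
    filter_upwards [Ioo_mem_nhdsGT hab] with x hx
    exact hva ▸ hvm.trans (hvmin ⟨hx.1.le, hx.2.le⟩)
  have := hvmin'.hasDerivWithinAt_Ioi_nonneg hv'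
  simp only [sub_self, mul_zero, Real.exp_zero, mul_one, smul_eq_mul, zero_sub] at this
  nlinarith

theorem nonpos_of_eq_rpow_mul {p q K γ b : ℝ} {w d : ℝ → ℝ} (hq : 0 ≤ q) (hK : 0 ≤ K)
    (hγ : 0 < γ) (hγq : γ ^ 2 + (p - 1) * γ = q) (hb : 0 < b)
    (hbK : K * (b + b ^ 2) < 2 * γ + p) (hd : ContinuousOn d (Icc 0 b)) (hd0 : d 0 ≤ 0)
    (hwd : ∀ r ∈ Ioc 0 b, w r = r ^ γ * d r)
    (hsol : ∀ m ∈ Ioo 0 b, IsLinearSuperSolutionAt p q K w m) : w b ≤ 0 := by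
  by_contra! hwb
  set φ : ℝ → ℝ := (fun r => r ^ γ) + fun r => r ^ (γ + 1)
  have hφb : 0 < φ b := by simp only [φ, Pi.add_apply]; positivity
  set ε := w b / φ b
  have hε : 0 < ε := div_pos hwb hφb
  -- `v` extends `w - ε φ` continuously by `0` at the origin
  set v : ℝ → ℝ := fun r => r ^ γ * (d r - ε * (1 + r))
  have hv : ∀ r ∈ Ioc 0 b, v r = (w - ε • φ) r := by
    intro r hr
    simp only [v, φ, Pi.sub_apply, Pi.smul_apply, Pi.add_apply, smul_eq_mul, hwd r hr,
      Real.rpow_add_one hr.1.ne']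
    ring
  have hv0 : v 0 = 0 := by simp [v, Real.zero_rpow hγ.ne']
  have hvb : v b = 0 := by
    rw [hv b ⟨hb, le_rfl⟩]
    simp [ε, div_mul_cancel₀ _ hφb.ne']
  have hdε : ContinuousOn (fun r => d r - ε * (1 + r)) (Icc 0 b) := hd.sub (by fun_prop)
  have hvc : ContinuousOn v (Icc 0 b) :=
    (Real.continuous_rpow_const hγ.le).continuousOn.mul hdε
  obtain ⟨x, hx, hvx⟩ : ∃ x ∈ Ioo 0 b, v x < 0 := by
    have := left_nhdsWithin_Ioo_neBot hb
    have hlim : ∀ᶠ r in 𝓝[Ioo 0 b] 0, d r - ε * (1 + r) < 0 :=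
      ((hdε 0 ⟨le_rfl, hb.le⟩).mono_left (nhdsWithin_mono _ Ioo_subset_Icc_self)).eventually
        (gt_mem_nhds (by linarith))
    obtain ⟨x, hx1, hx2⟩ := (hlim.and self_mem_nhdsWithin).exists
    exact ⟨x, hx2, mul_neg_of_pos_of_neg (Real.rpow_pos_of_pos hx2.1 γ) hx1⟩
  obtain ⟨m, hm, hmin⟩ := isCompact_Icc.exists_isMinOn (nonempty_Icc.2 hb.le) hvc
  have hvm : v m < 0 := (hmin ⟨hx.1.le, hx.2.le⟩).trans_lt hvx
  have hm0 : 0 < m := hm.1.lt_of_ne (by rintro rfl; linarith)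
  have hmb : m < b := hm.2.lt_of_ne (by rintro rfl; linarith)
  have hloc : IsLocalMin (w - ε • φ) m := (hmin.isLocalMin (Icc_mem_nhds hm0 hmb)).congr <| by
    filter_upwards [Ioo_mem_nhds hm0 hmb] with r hr using hv r ⟨hr.1, hr.2.le⟩
  have hmK : K * (m + m ^ 2) < 2 * γ + p :=
    lt_of_le_of_lt (by gcongr) hbK
  refine (hsol m ⟨hm0, hmb⟩).not_isLocalMin_sub_smul hq hK ?_
    (lt_radialOp_rpow_add_rpow hγq hm0 hmK) hε
    (hv m ⟨hm0, hmb.le⟩ ▸ hvm.le : (w - ε • φ) m ≤ 0) hloc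
  exact (Real.contDiffAt_rpow_const_of_ne hm0.ne').add (Real.contDiffAt_rpow_const_of_ne hm0.ne')

lemma gammaPlus_pos {p q : ℝ} (hq : 0 < q) : 0 < gammaPlus p q := by
  have h : |p - 1| < Real.sqrt ((p - 1) ^ 2 + 4 * q) := by
    rw [← Real.sqrt_sq_eq_abs]
    exact Real.sqrt_lt_sqrt (sq_nonneg _) (by linarith)
  unfold gammaPlus
  linarith [le_abs_self (p - 1)]

lemma gammaPlus_sq_add_mul {p q : ℝ} (hdisc : 0 ≤ (p - 1) ^ 2 + 4 * q) :
    gammaPlus p q ^ 2 + (p - 1) * gammaPlus p q = q := by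
  unfold gammaPlus
  linear_combination Real.sq_sqrt hdisc / 4

theorem stmt7_general (p q sp : ℝ) (hp : 0 ≤ p) (hq : 0 < q)
    (F : ℝ → ℝ) (hF : CondF F sp)
    (R : ℝ)
    (ub lb f g : ℝ → ℝ)
    (hsuper : IsSuperSolutionOn p q F (Set.Ioo 0 R) ub)
    (hsub : IsSubSolutionOn p q F (Set.Ioo 0 R) lb)
    (hf : ContinuousOn f (Set.Ico 0 R)) (hg : ContinuousOn g (Set.Ico 0 R))
    (hubf : ∀ r ∈ Set.Ico (0:ℝ) R, ub r = r ^ gammaPlus p q * f r)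
    (hlbg : ∀ r ∈ Set.Ico (0:ℝ) R, lb r = r ^ gammaPlus p q * g r)
    (hge : ∀ r ∈ Set.Ioo (0:ℝ) R, lb r ≤ ub r) :
    g 0 < f 0 ∨ ∀ r ∈ Set.Ioo (0:ℝ) R, ub r = lb r := by
  refine or_iff_not_imp_left.2 fun hfg r hr => ?_
  set γ := gammaPlus p q
  have hγ : 0 < γ := gammaPlus_pos hq
  have hrpow : ContinuousOn (fun r : ℝ => r ^ γ) (Ico 0 R) :=
    (Real.continuous_rpow_const hγ.le).continuousOn
  have hub : ContinuousOn ub (Ico 0 R) := (hrpow.mul hf).congr hubf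
  have hlb : ContinuousOn lb (Ico 0 R) := (hrpow.mul hg).congr hlbg
  have hrR : Icc 0 r ⊆ Ico 0 R := Icc_subset_Ico_right hr.2
  obtain ⟨K, hK⟩ := exists_isLinearSuperSolutionAt_sub hF.1 hsuper hsub hge isCompact_Icc
    (hub.mono hrR) (hlb.mono hrR)
  have hsol : ∀ m ∈ Ioc 0 r, IsLinearSuperSolutionAt p q K (ub - lb) m :=
    fun m hm => hK m ⟨Ioc_subset_Icc_self hm, hm.1, hm.2.trans_lt hr.2⟩
  obtain ⟨b, hbK, hb⟩ : ∃ b, K * (b + b ^ 2) < 2 * γ + p ∧ b ∈ Ioo 0 r :=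
    ((((by fun_prop : Continuous fun b : ℝ => K * (b + b ^ 2)).tendsto 0).eventually
      (gt_mem_nhds (by simp; linarith))).filter_mono nhdsWithin_le_nhds |>.and
      (Ioo_mem_nhdsGT hr.1)).exists
  have hbR : Icc 0 b ⊆ Ico 0 R := Icc_subset_Ico_right (hb.2.trans hr.2)
  have hwb : (ub - lb) b = 0 := le_antisymm
    (nonpos_of_eq_rpow_mul (d := f - g) hq.le K.2 hγ (gammaPlus_sq_add_mul (by positivity)) hb.1
      hbK ((hf.sub hg).mono hbR) (sub_nonpos.2 (not_lt.1 hfg))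
      (fun m hm => by simp [hubf m (hbR (Ioc_subset_Icc_self hm)),
        hlbg m (hbR (Ioc_subset_Icc_self hm)), mul_sub])
      (fun m hm => hsol m ⟨hm.1, hm.2.le.trans hb.2.le⟩))
    (sub_nonneg.2 (hge b ⟨hb.1, hb.2.trans hr.2⟩))
  have hmin : IsLocalMin (ub - lb) b := by
    filter_upwards [Ioo_mem_nhds hb.1 (hb.2.trans hr.2)] with x hx
    simpa [hwb] using hge x hx
  have hwr := hmin.nonpos_of_isLinearSuperSolutionAt hwb hp hq.le K.2 hb.1 hb.2
    ((hub.sub hlb).mono (Icc_subset_Icc_left hb.1.le |>.trans hrR))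
    (fun m hm => hsol m ⟨hb.1.trans_le hm.1, hm.2⟩)
  linarith [hge r hr, show (ub - lb) r = ub r - lb r from rfl]

/-- Hopf-type lemma at the origin. -/
theorem stmt7 (p q sp : ℝ) (hp : 0 ≤ p) (hq : 0 < q) (hsp : 0 < sp)
    (F : ℝ → ℝ) (hF : CondF F sp)
    (R : ℝ) (hR : 0 < R)
    (ub lb f g : ℝ → ℝ)
    (hsuper : IsSuperSolutionOn p q F (Set.Ioo 0 R) ub)
    (hsub : IsSubSolutionOn p q F (Set.Ioo 0 R) lb)
    (hf : ContinuousOn f (Set.Ico 0 R)) (hg : ContinuousOn g (Set.Ico 0 R))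
    (hubf : ∀ r ∈ Set.Ico (0:ℝ) R, ub r = r ^ gammaPlus p q * f r)
    (hlbg : ∀ r ∈ Set.Ico (0:ℝ) R, lb r = r ^ gammaPlus p q * g r)
    (hge : ∀ r ∈ Set.Ioo (0:ℝ) R, lb r ≤ ub r) :
    g 0 < f 0 ∨ ∀ r ∈ Set.Ioo (0:ℝ) R, ub r = lb r :=
  stmt7_general p q sp hp hq F hF R ub lb f g hsuper hsub hf hg hubf hlbg hge
end

section
/- Monotonicity: Let 0 < R ≤ ∞ and let u be a solution of the boundary-value problem (⋆)&(BC) on (0,R). If r₁ ∈ [0,R) is the last zero of u, i.e. u(r₁) = 0 and u(r) > 0 for all r ∈ (r₁,R), then u is strictly increasing on (r₁,R). -/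
/-!
Suppose `u a ≥ u b` for some `r₁ < a < b`. Then `u` attains its maximum `M > 0` over `[r₁, b]` at
an interior point `c`, where `u' = 0 ≥ u''`; the equation then gives `F M < 0`, so `M < s₊` and by
the boundary condition `u` climbs above `M` later: there is a first `e ≥ b` at which `u` comes back
to the level `M`. On `[c, e]` the energy `E = u'²/2 - ∫₀ᵘ F - q (u² - M²) / (2r²)` has
`E' = -(p/r) u'² + q (u² - M²)/r³ ≤ 0`, with strict inequality where `u < M`, and such points exist
because the constant `M ≠ 0` does not solve the equation. Hence `E e < E c = -∫₀ᴹ F ≤ E e`.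
-/

open Set Filter Topology MeasureTheory
open scoped ENNReal NNReal

/-- `u` is a solution of the boundary-value problem (⋆)&(BC) on `(0,R)` with `R ∈ (0,∞]`:
`u` is continuous on `[0,R)`, `C²` on `(0,R)`, satisfies (⋆) pointwise on `(0,R)`,
`u(0) = 0`, and `u(r) → s₊` as `r → R⁻` (for `R < ∞`) resp. `r → ∞` (for `R = ∞`). -/
def IsBVPSolution (p q : ℝ) (F : ℝ → ℝ) (sp : ℝ) (R : ℝ≥0∞) (u : ℝ → ℝ) : Prop :=
  ContinuousOn u {r : ℝ | 0 ≤ r ∧ ENNReal.ofReal r < R} ∧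
    (∀ r : ℝ, 0 < r → ENNReal.ofReal r < R → ContDiffAt ℝ 2 u r) ∧
    (∀ r : ℝ, 0 < r → ENNReal.ofReal r < R → ODEAt p q F u r) ∧
    u 0 = 0 ∧
    (∀ R' : ℝ, 0 < R' → R = ENNReal.ofReal R' →
      Filter.Tendsto u (nhdsWithin R' (Set.Iio R')) (nhds sp)) ∧
    (R = ⊤ → Filter.Tendsto u Filter.atTop (nhds sp))

lemma IsLocalMax.deriv_deriv_nonpos {f : ℝ → ℝ} {c : ℝ} (h : IsLocalMax f c)
    (hf : ContinuousAt f c) : deriv (deriv f) c ≤ 0 := by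
  by_contra! hpos
  have hmin : IsLocalMin f c := isLocalMin_of_deriv_deriv_pos hpos h.deriv_eq_zero hf
  have hconst : f =ᶠ[𝓝 c] fun _ => f c := (h.and hmin).mono fun x hx => le_antisymm hx.1 hx.2
  have : deriv (deriv f) c = 0 := by simp [hconst.deriv.deriv_eq]
  exact hpos.ne' this

lemma lt_of_hasDerivAt_nonpos_of_neg {f f' : ℝ → ℝ} {a b x : ℝ}
    (hf : ∀ y ∈ Icc a b, HasDerivAt f (f' y) y) (hf' : ∀ y ∈ Ioo a b, f' y ≤ 0)
    (hx : x ∈ Ioo a b) (hx' : f' x < 0) : f b < f a := by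
  have hab : a ≤ b := (hx.1.trans hx.2).le
  have hanti : AntitoneOn f (Icc a b) := by
    refine antitoneOn_of_hasDerivWithinAt_nonpos (f' := f') (convex_Icc a b)
      (fun y hy => (hf y hy).continuousAt.continuousWithinAt) (fun y hy => ?_) (fun y hy => ?_)
    all_goals rw [interior_Icc] at hy
    · exact (hf y (Ioo_subset_Icc_self hy)).hasDerivWithinAt
    · exact hf' y hy
  refine (hanti (left_mem_Icc.2 hab) (right_mem_Icc.2 hab) hab).lt_of_ne fun hba => ?_
  -- `f` is then constant on `[a, b]`, so its derivative vanishes at `x`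
  have hconst : f =ᶠ[𝓝 x] fun _ => f a := by
    filter_upwards [Ioo_mem_nhds hx.1 hx.2] with y hy
    have hy' := Ioo_subset_Icc_self hy
    exact le_antisymm (hanti (left_mem_Icc.2 hab) hy' hy'.1)
      (hba ▸ hanti hy' (right_mem_Icc.2 hab) hy'.2)
  have : f' x = 0 := (hf x (Ioo_subset_Icc_self hx)).unique
    ((hasDerivAt_const x (f a)).congr_of_eventuallyEq hconst)
  exact hx'.ne this

lemma exists_mem_Ioo_isMaxOn {f : ℝ → ℝ} {a b x : ℝ} (hf : ContinuousOn f (Icc a b))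
    (hx : x ∈ Ioo a b) (ha : f a < f x) (hb : f b ≤ f x) :
    ∃ c ∈ Ioo a b, IsMaxOn f (Icc a b) c := by
  have hxI : x ∈ Icc a b := Ioo_subset_Icc_self hx
  obtain ⟨c, hc, hmax⟩ := isCompact_Icc.exists_isMaxOn ⟨x, hxI⟩ hf
  rcases eq_or_ne c b with rfl | hcb
  · exact ⟨x, hx, fun y hy => (hmax hy).trans hb⟩
  · have hca : c ≠ a := by
      rintro rfl
      exact (hmax hxI).not_gt ha
    exact ⟨c, ⟨hc.1.lt_of_ne hca.symm, hc.2.lt_of_ne hcb⟩, hmax⟩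

lemma exists_eq_forall_le_of_le {f : ℝ → ℝ} {a b M : ℝ} (hab : a ≤ b)
    (hf : ContinuousOn f (Icc a b)) (ha : f a ≤ M) (hb : M ≤ f b) :
    ∃ e ∈ Icc a b, f e = M ∧ ∀ r ∈ Icc a e, f r ≤ M := by
  set S := Icc a b ∩ f ⁻¹' {M}
  have hS : IsClosed S := hf.preimage_isClosed_of_isClosed isClosed_Icc isClosed_singleton
  obtain ⟨s, hs, hfs⟩ := intermediate_value_Icc hab hf ⟨ha, hb⟩
  have hbdd : BddBelow S := ⟨a, fun y hy => hy.1.1⟩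
  obtain ⟨heI, hfe⟩ := hS.csInf_mem ⟨s, hs, hfs⟩ hbdd
  refine ⟨sInf S, heI, hfe, fun r hr => le_of_not_gt fun hMr => ?_⟩
  have hre : r < sInf S := hr.2.lt_of_ne (by rintro rfl; exact hMr.ne' hfe)
  obtain ⟨t, ht, hft⟩ := intermediate_value_Icc hr.1
    (hf.mono (Icc_subset_Icc_right (hre.le.trans heI.2))) ⟨ha, hMr.le⟩
  exact (csInf_le hbdd ⟨⟨ht.1, ht.2.trans (hre.le.trans heI.2)⟩, hft⟩).not_gt (ht.2.trans_lt hre)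

lemma CondF.lt_of_neg {F : ℝ → ℝ} {sp t : ℝ} (hF : CondF F sp) (ht : F t < 0) : t < sp := by
  obtain ⟨-, -, hFsp, -, hFpos, -⟩ := hF
  by_contra! hle
  rcases hle.eq_or_lt with rfl | hlt
  · exact ht.ne hFsp
  · exact ht.not_gt (hFpos t hlt)

lemma IsLocalMax.neg_of_odeAt {p q : ℝ} {F u : ℝ → ℝ} {c : ℝ} (hmax : IsLocalMax u c)
    (hq : 0 < q) (hc : 0 < c) (hu : ContinuousAt u c) (hode : ODEAt p q F u c) (hpos : 0 < u c) :
    F (u c) < 0 := by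
  have h₁ : deriv u c = 0 := hmax.deriv_eq_zero
  have h₂ : deriv (deriv u) c ≤ 0 := hmax.deriv_deriv_nonpos hu
  have hq' : 0 < q / c ^ 2 * u c := by positivity
  unfold ODEAt at hode
  rw [h₁] at hode
  linarith

lemma ODEAt.eq_of_eventuallyEq_const {p q : ℝ} {F u : ℝ → ℝ} {r M : ℝ}
    (hode : ODEAt p q F u r) (hu : u =ᶠ[𝓝 r] fun _ => M) : -(q / r ^ 2 * M) = F M := by
  have h₁ : deriv u r = 0 := by simp [hu.deriv_eq]
  have h₂ : deriv (deriv u) r = 0 := by simp [hu.deriv.deriv_eq]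
  unfold ODEAt at hode
  rw [h₁, h₂, hu.eq_of_nhds] at hode
  linarith

lemma not_eqOn_const_of_odeAt {p q : ℝ} {F u : ℝ → ℝ} {c d M : ℝ} (hq : q ≠ 0) (hM : M ≠ 0)
    (hc : 0 < c) (hcd : c < d) (hode : ∀ r ∈ Ioo c d, ODEAt p q F u r) :
    ¬ EqOn u (fun _ => M) (Ioo c d) := by
  intro hconst
  have key : ∀ r ∈ Ioo c d, -(q / r ^ 2 * M) = F M := fun r hr =>
    (hode r hr).eq_of_eventuallyEq_const (eventually_of_mem (Ioo_mem_nhds hr.1 hr.2) hconst)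
  have h₁ : (2 * c + d) / 3 ∈ Ioo c d := ⟨by linarith, by linarith⟩
  have h₂ : (c + 2 * d) / 3 ∈ Ioo c d := ⟨by linarith, by linarith⟩
  have heq := (key _ h₁).trans (key _ h₂).symm
  have hpos₁ : 0 < (2 * c + d) / 3 := hc.trans h₁.1
  have hpos₂ : 0 < (c + 2 * d) / 3 := hc.trans h₂.1
  have hdiv : q / ((2 * c + d) / 3) ^ 2 = q / ((c + 2 * d) / 3) ^ 2 :=
    mul_right_cancel₀ hM (neg_injective heq)
  rw [div_eq_div_iff (by positivity) (by positivity)] at hdiv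
  have hsq := mul_left_cancel₀ hq hdiv
  rw [pow_left_inj₀ hpos₂.le hpos₁.le two_ne_zero] at hsq
  linarith

noncomputable def radialEnergy (q : ℝ) (F u : ℝ → ℝ) (M r : ℝ) : ℝ :=
  deriv u r ^ 2 / 2 - (∫ t in (0 : ℝ)..u r, F t) - q * (u r ^ 2 - M ^ 2) / (2 * r ^ 2)

lemma hasDerivAt_radialEnergy {p q : ℝ} {F u : ℝ → ℝ} {M r : ℝ} (hF : Continuous F)
    (hu : ContDiffAt ℝ 2 u r) (hr : r ≠ 0) (hode : ODEAt p q F u r) :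
    HasDerivAt (radialEnergy q F u M)
      (-(p / r) * deriv u r ^ 2 + q * (u r ^ 2 - M ^ 2) / r ^ 3) r := by
  have hu' : HasDerivAt u (deriv u r) r := (hu.differentiableAt (by norm_num)).hasDerivAt
  have hu'' : HasDerivAt (deriv u) (deriv (deriv u) r) r :=
    ((hu.derivWithin (m := 1) (by norm_num)).differentiableAt one_ne_zero).hasDerivAt
  have hG : HasDerivAt (fun s => ∫ t in (0 : ℝ)..s, F t) (F (u r)) (u r) :=
    (hF.integral_hasStrictDerivAt 0 _).hasDerivAt
  have h := (((hu''.pow 2).div_const 2).sub (hG.comp r hu')).sub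
    ((((hu'.pow 2).sub_const (M ^ 2)).const_mul q).div ((hasDerivAt_pow 2 r).const_mul 2)
      (by positivity))
  refine HasDerivAt.congr_deriv (f := radialEnergy q F u M) h ?_
  have hu''r : deriv (deriv u) r = F (u r) + q / r ^ 2 * u r - p / r * deriv u r := by
    unfold ODEAt at hode
    linarith
  simp only [Pi.pow_apply, hu''r]
  field_simp
  ring

lemma exists_mem_Ioo_gt_of_deriv_eq_zero {p q : ℝ} {F u : ℝ → ℝ} {c e M : ℝ} (hp : 0 ≤ p)
    (hq : 0 < q) (hF : Continuous F) (hc : 0 < c) (hce : c < e)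
    (hu : ∀ r ∈ Icc c e, ContDiffAt ℝ 2 u r) (hode : ∀ r ∈ Icc c e, ODEAt p q F u r)
    (hnonneg : ∀ r ∈ Icc c e, 0 ≤ u r) (hM : M ≠ 0) (huc : u c = M) (hu'c : deriv u c = 0)
    (hue : u e = M) : ∃ r ∈ Ioo c e, M < u r := by
  by_contra! hle
  have hle' : ∀ r ∈ Icc c e, u r ≤ M := by
    intro r hr
    rcases hr.1.eq_or_lt with rfl | hcr
    · exact huc.le
    rcases hr.2.eq_or_lt with rfl | hre
    · exact hue.le
    exact hle r ⟨hcr, hre⟩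
  obtain ⟨x, hx, hxM⟩ : ∃ x ∈ Ioo c e, u x ≠ M := by
    by_contra! h
    exact not_eqOn_const_of_odeAt hq.ne' hM hc hce (fun r hr => hode r (Ioo_subset_Icc_self hr)) h
  have hrate : ∀ r ∈ Ioo c e, -(p / r) * deriv u r ^ 2 + q * (u r ^ 2 - M ^ 2) / r ^ 3 ≤
      q * (u r ^ 2 - M ^ 2) / r ^ 3 := fun r hr => by
    have : 0 ≤ p / r * deriv u r ^ 2 := by have := hc.trans hr.1; positivity
    linarith
  have hdrop : radialEnergy q F u M e < radialEnergy q F u M c := by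
    refine lt_of_hasDerivAt_nonpos_of_neg
      (fun r hr => hasDerivAt_radialEnergy hF (hu r hr) (hc.trans_le hr.1).ne' (hode r hr))
      (fun r hr => (hrate r hr).trans ?_) hx ((hrate x hx).trans_lt ?_)
    · have hr' := Ioo_subset_Icc_self hr
      have : u r ^ 2 ≤ M ^ 2 := pow_le_pow_left₀ (hnonneg r hr') (hle' r hr') 2
      have := hc.trans hr.1
      exact div_nonpos_of_nonpos_of_nonneg (by nlinarith) (by positivity)
    · have hx' := Ioo_subset_Icc_self hx
      have : u x ^ 2 < M ^ 2 :=
        pow_lt_pow_left₀ ((hle' x hx').lt_of_ne hxM) (hnonneg x hx') two_ne_zero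
      have := hc.trans hx.1
      exact div_neg_of_neg_of_pos (by nlinarith) (by positivity)
  simp only [radialEnergy, huc, hu'c, hue, sub_self, mul_zero, zero_div, sub_zero] at hdrop
  nlinarith [sq_nonneg (deriv u e)]

lemma IsBVPSolution.exists_lt_apply {p q sp M b : ℝ} {F u : ℝ → ℝ} {R : ℝ≥0∞}
    (hu : IsBVPSolution p q F sp R u) (hM : M < sp) (hb : ENNReal.ofReal b < R) :
    ∃ T, b < T ∧ ENNReal.ofReal T < R ∧ M < u T := by
  obtain ⟨-, -, -, -, hlim, hlimTop⟩ := hu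
  rcases eq_or_ne R ⊤ with rfl | hR
  · obtain ⟨T, hMT, hbT⟩ :=
      (((hlimTop rfl).eventually (eventually_gt_nhds hM)).and (eventually_gt_atTop b)).exists
    exact ⟨T, hbT, ENNReal.ofReal_lt_top, hMT⟩
  · have hRR : R = ENNReal.ofReal R.toReal := (ENNReal.ofReal_toReal hR).symm
    obtain ⟨hbR, hR0⟩ := ENNReal.ofReal_lt_ofReal_iff'.1 (hRR ▸ hb)
    obtain ⟨T, hMT, hT⟩ := (((hlim _ hR0 hRR).eventually (eventually_gt_nhds hM)).and
      (Ioo_mem_nhdsLT hbR)).exists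
    exact ⟨T, hT.1, hRR ▸ ENNReal.ofReal_lt_ofReal_iff'.2 ⟨hT.2, hR0⟩, hMT⟩

theorem stmt11_general (p q sp : ℝ) (hp : 0 ≤ p) (hq : 0 < q)
    (F : ℝ → ℝ) (hF : CondF F sp)
    (R : ℝ≥0∞) (u : ℝ → ℝ)
    (hu : IsBVPSolution p q F sp R u)
    (r₁ : ℝ) (hr₁0 : 0 ≤ r₁)
    (hz : u r₁ = 0)
    (hpos : ∀ r : ℝ, r₁ < r → ENNReal.ofReal r < R → 0 < u r) :
    StrictMonoOn u {r : ℝ | r₁ < r ∧ ENNReal.ofReal r < R} := by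
  have ⟨hcont, hC2, hode, _⟩ := hu
  have hdom {r T : ℝ} (h : r ≤ T) (hT : ENNReal.ofReal T < R) : ENNReal.ofReal r < R :=
    (ENNReal.ofReal_le_ofReal h).trans_lt hT
  rintro a ⟨ha₁, haR⟩ b ⟨hb₁, hbR⟩ hab
  by_contra! hba
  obtain ⟨c, hc, hcmax⟩ := exists_mem_Ioo_isMaxOn
    (hcont.mono fun r hr => ⟨hr₁0.trans hr.1, hdom hr.2 hbR⟩) ⟨ha₁, hab⟩ (hz ▸ hpos a ha₁ haR) hba
  have hc0 : 0 < c := hr₁0.trans_lt hc.1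
  have hcR : ENNReal.ofReal c < R := hdom hc.2.le hbR
  have hM : 0 < u c := (hpos a ha₁ haR).trans_le (hcmax ⟨ha₁.le, hab.le⟩)
  have hmax : IsLocalMax u c := hcmax.isLocalMax (Icc_mem_nhds hc.1 hc.2)
  have hMsp : u c < sp :=
    hF.lt_of_neg (hmax.neg_of_odeAt hq hc0 (hC2 c hc0 hcR).continuousAt (hode c hc0 hcR) hM)
  obtain ⟨T, hbT, hTR, hMT⟩ := hu.exists_lt_apply hMsp hbR
  obtain ⟨e, he, hue, hle⟩ := exists_eq_forall_le_of_le hbT.le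
    (hcont.mono fun r hr => ⟨hr₁0.trans (hb₁.le.trans hr.1), hdom hr.2 hTR⟩)
    (hcmax ⟨hb₁.le, le_rfl⟩) hMT.le
  have hmem : ∀ r ∈ Icc c e, 0 < r ∧ ENNReal.ofReal r < R := fun r hr =>
    ⟨hc0.trans_le hr.1, hdom (hr.2.trans he.2) hTR⟩
  obtain ⟨r, hr, hMr⟩ := exists_mem_Ioo_gt_of_deriv_eq_zero hp hq hF.1.continuous hc0
    (hc.2.trans_le he.1) (fun r hr => hC2 r (hmem r hr).1 (hmem r hr).2)
    (fun r hr => hode r (hmem r hr).1 (hmem r hr).2)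
    (fun r hr => (hpos r (hc.1.trans_le hr.1) (hmem r hr).2).le) hM.ne' rfl hmax.deriv_eq_zero hue
  rcases le_total r b with hrb | hbr
  · exact (hcmax ⟨hc.1.le.trans hr.1.le, hrb⟩).not_gt hMr
  · exact (hle r ⟨hbr, hr.2.le⟩).not_gt hMr

/-- a solution of (⋆)&(BC) is strictly increasing beyond its last zero. -/
theorem stmt11 (p q sp : ℝ) (hp : 0 ≤ p) (hq : 0 < q) (hsp : 0 < sp)
    (F : ℝ → ℝ) (hF : CondF F sp)
    (R : ℝ≥0∞) (hR : 0 < R) (u : ℝ → ℝ)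
    (hu : IsBVPSolution p q F sp R u)
    (r₁ : ℝ) (hr₁0 : 0 ≤ r₁) (hr₁R : ENNReal.ofReal r₁ < R)
    (hz : u r₁ = 0)
    (hpos : ∀ r : ℝ, r₁ < r → ENNReal.ofReal r < R → 0 < u r) :
    StrictMonoOn u {r : ℝ | r₁ < r ∧ ENNReal.ofReal r < R} :=
  stmt11_general p q sp hp hq F hF R u hu r₁ hr₁0 hz hpos
end
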